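/- Let N ≥ 1, let z_1,…,z_N be real numbers, let Q_0 ≤ Q_1 be reals, and let Z_u ≥ 0. Consider the extended loss sequence z' of length N+2 with z'_1 = Z_u, z'_{n+1} = z_n for 1 ≤ n ≤ N, and z'_{N+2} = Z_u. Then the minimum of ∑_{n=1}^{N+2} z'_n q_n over all feasible unimodal sequences q of length N+2 equals 2 Q_0 Z_u plus the minimum of ∑_{n=1}^{N} z_n q_n over all feasible unimodal sequences q of length N. -/

import Mathlib

/-- `q` is feasible: each coordinate with index in `{1,…,N}` lies in `[Q0, Q1]`. -/
def Feasible (Q0 Q1 : ℝ) (N : ℕ) (q : ℕ → ℝ) : Prop :=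
  ∀ n, 1 ≤ n → n ≤ N → Q0 ≤ q n ∧ q n ≤ Q1

/-- `q` is nondecreasing on indices `{a,…,b}`. -/
def NondecOn (q : ℕ → ℝ) (a b : ℕ) : Prop :=
  ∀ i j, a ≤ i → i ≤ j → j ≤ b → q i ≤ q j

/-- `q` is nonincreasing on indices `{a,…,b}`. -/
def NonincOn (q : ℕ → ℝ) (a b : ℕ) : Prop :=
  ∀ i j, a ≤ i → i ≤ j → j ≤ b → q j ≤ q i

/-- `q` is unimodal on `{1,…,M}`. -/
def UnimodalOn (M : ℕ) (q : ℕ → ℝ) : Prop :=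
  ∃ p, 1 ≤ p ∧ p ≤ M ∧ NondecOn q 1 p ∧ NonincOn q p M

/-- Linear loss `∑_{n=1}^M z_n q_n`. -/
noncomputable def linLoss (z q : ℕ → ℝ) (M : ℕ) : ℝ :=
  ∑ n ∈ Finset.Icc 1 M, z n * q n

/-- The extended loss sequence of length `N + 2`: `z'_1 = Zu`, `z'_{n+1} = z_n` for
`1 ≤ n ≤ N`, and `z'_{N+2} = Zu` (two dummy samples at the ends). -/
def extLoss (z : ℕ → ℝ) (N : ℕ) (Zu : ℝ) : ℕ → ℝ :=
  fun n => if n = 1 then Zu else if n ≤ N + 1 then z (n - 1) else Zu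

/-!
Unimodal sequences on `{1,…,M}` are exactly the quasiconcave ones, `min q_i q_k ≤ q_j` for
`i ≤ j ≤ k`, which is a closed condition; hence the minimal loss exists by compactness of the box
`[Q0, Q1]^ℕ`. Padding a feasible unimodal `q` with `Q0` at both ends (that is, `extLoss q N Q0`)
keeps it feasible and unimodal and adds `2 Q0 Zu` to the loss. Conversely, the middle `N` entries
of a feasible unimodal sequence of length `N + 2` form a feasible unimodal sequence, and since
`Zu ≥ 0` the two end terms contribute at least `2 Q0 Zu`.
-/

open Finset

def Quasiconcave (M : ℕ) (q : ℕ → ℝ) : Prop :=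
  ∀ i j k, 1 ≤ i → i ≤ j → j ≤ k → k ≤ M → min (q i) (q k) ≤ q j

def unimodalLosses (Q0 Q1 : ℝ) (z : ℕ → ℝ) (M : ℕ) : Set ℝ :=
  {L | ∃ q : ℕ → ℝ, Feasible Q0 Q1 M q ∧ UnimodalOn M q ∧ L = linLoss z q M}

section Quasiconcave

variable {M N : ℕ} {q q' : ℕ → ℝ}

theorem UnimodalOn.quasiconcave (h : UnimodalOn M q) : Quasiconcave M q := by
  obtain ⟨p, -, -, hnd, hni⟩ := h
  intro i j k hi hij hjk hk
  by_cases hjp : j ≤ p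
  · exact min_le_of_left_le (hnd i j hi hij hjp)
  · exact min_le_of_right_le (hni j k (by omega) hjk hk)

/-- A maximiser of `q` on `{1,…,M}` is a peak. -/
theorem Quasiconcave.unimodalOn (hM : 1 ≤ M) (h : Quasiconcave M q) : UnimodalOn M q := by
  obtain ⟨p, hp, hmax⟩ := (Icc 1 M).exists_max_image q (nonempty_Icc.2 hM)
  rw [mem_Icc] at hp
  refine ⟨p, hp.1, hp.2, fun i j hi hij hjp => ?_, fun i j hpi hij hj => ?_⟩
  · exact (le_min le_rfl (hmax i (mem_Icc.2 ⟨hi, by omega⟩))).trans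
      (h i j p hi hij hjp hp.2)
  · exact (le_min (hmax j (mem_Icc.2 ⟨by omega, hj⟩)) le_rfl).trans
      (h p i j hp.1 hpi hij hj)

theorem Quasiconcave.congr (h : Quasiconcave M q) (hqq' : ∀ n, 1 ≤ n → n ≤ M → q n = q' n) :
    Quasiconcave M q' := by
  intro i j k hi hij hjk hk
  rw [← hqq' i hi (by omega), ← hqq' j (by omega) (by omega), ← hqq' k (by omega) hk]
  exact h i j k hi hij hjk hk

theorem Quasiconcave.comp_add (h : Quasiconcave M q) {k : ℕ} (hNM : N + k ≤ M) :
    Quasiconcave N fun n => q (n + k) :=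
  fun _ _ _ hi hij hjk hl => h _ _ _ (by omega) (by omega) (by omega) (by omega)

theorem Quasiconcave.extLoss {c : ℝ} (h : Quasiconcave N q)
    (hc : ∀ n, 1 ≤ n → n ≤ N → c ≤ q n) : Quasiconcave (N + 2) (extLoss q N c) := by
  intro i j k hi hij hjk hk
  simp only [_root_.extLoss]
  -- the padded ends carry `c`, which lies below every other value
  split_ifs <;> first
    | omega
    | exact min_le_left _ _
    | exact min_le_right _ _
    | exact min_le_of_left_le (hc _ (by omega) (by omega))
    | exact min_le_of_right_le (hc _ (by omega) (by omega))
    | exact h _ _ _ (by omega) (by omega) (by omega) (by omega)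

theorem isClosed_setOf_quasiconcave (M : ℕ) : IsClosed {q : ℕ → ℝ | Quasiconcave M q} := by
  simp only [Quasiconcave, Set.ofPred_forall]
  refine isClosed_iInter fun i => isClosed_iInter fun j => isClosed_iInter fun k => ?_
  refine isClosed_iInter fun _ => isClosed_iInter fun _ => isClosed_iInter fun _ =>
    isClosed_iInter fun _ => isClosed_le ?_ (continuous_apply j)
  exact (continuous_apply i).min (continuous_apply k)

end Quasiconcave

theorem linLoss_congr {z q q' : ℕ → ℝ} {M : ℕ} (h : ∀ n, 1 ≤ n → n ≤ M → q n = q' n) :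
    linLoss z q M = linLoss z q' M :=
  sum_congr rfl fun n hn => by rw [h n (mem_Icc.1 hn).1 (mem_Icc.1 hn).2]

theorem linLoss_eq_sum_range (z q : ℕ → ℝ) (M : ℕ) :
    linLoss z q M = ∑ k ∈ range M, z (k + 1) * q (k + 1) := by
  rw [linLoss, ← Ico_add_one_right_eq_Icc, sum_Ico_eq_sum_range, Nat.add_sub_cancel]
  simp only [add_comm 1]

theorem linLoss_extLoss (z q : ℕ → ℝ) (N : ℕ) (Zu : ℝ) :
    linLoss (extLoss z N Zu) q (N + 2) =
      Zu * q 1 + linLoss z (fun n => q (n + 1)) N + Zu * q (N + 2) := by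
  rw [linLoss_eq_sum_range, linLoss_eq_sum_range, sum_range_succ, sum_range_succ']
  have hmid : ∀ k ∈ range N,
      extLoss z N Zu (k + 1 + 1) * q (k + 1 + 1) = z (k + 1) * q (k + 1 + 1) := by
    intro k hk
    rw [mem_range] at hk
    simp only [extLoss, if_neg (show k + 1 + 1 ≠ 1 by omega),
      if_pos (show k + 1 + 1 ≤ N + 1 by omega)]
    rfl
  rw [sum_congr rfl hmid]
  simp only [extLoss, ↓reduceIte, if_neg (show N + 1 + 1 ≠ 1 by omega),
    if_neg (show ¬ N + 1 + 1 ≤ N + 1 by omega)]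
  ring

theorem Feasible.extLoss {Q0 Q1 : ℝ} {N : ℕ} {q : ℕ → ℝ} (hQ : Q0 ≤ Q1)
    (h : Feasible Q0 Q1 N q) : Feasible Q0 Q1 (N + 2) (extLoss q N Q0) := by
  intro n h1 h2
  simp only [_root_.extLoss]
  split_ifs
  · exact ⟨le_rfl, hQ⟩
  · exact h (n - 1) (by omega) (by omega)
  · exact ⟨le_rfl, hQ⟩

theorem unimodalLosses_eq_image {Q0 Q1 : ℝ} (hQ : Q0 ≤ Q1) (z : ℕ → ℝ) {M : ℕ} (hM : 1 ≤ M) :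
    unimodalLosses Q0 Q1 z M = (fun q => linLoss z q M) ''
      (Set.univ.pi (fun _ => Set.Icc Q0 Q1) ∩ {q | Quasiconcave M q}) := by
  ext L
  constructor
  · rintro ⟨q, hfeas, huni, rfl⟩
    set q' : ℕ → ℝ := fun n => if 1 ≤ n ∧ n ≤ M then q n else Q0
    have hqq' : ∀ n, 1 ≤ n → n ≤ M → q n = q' n := fun n h1 h2 => (if_pos ⟨h1, h2⟩).symm
    refine ⟨q', ⟨fun n _ => ?_, huni.quasiconcave.congr hqq'⟩, (linLoss_congr hqq').symm⟩
    by_cases hn : 1 ≤ n ∧ n ≤ M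
    · simpa only [q', if_pos hn, Set.mem_Icc] using hfeas n hn.1 hn.2
    · simpa only [q', if_neg hn, Set.mem_Icc] using ⟨le_rfl, hQ⟩
  · rintro ⟨q, ⟨hbox, hq⟩, rfl⟩
    exact ⟨q, fun n _ _ => hbox n (Set.mem_univ n), hq.unimodalOn hM, rfl⟩

theorem exists_isLeast_unimodalLosses {Q0 Q1 : ℝ} (hQ : Q0 ≤ Q1) (z : ℕ → ℝ) {M : ℕ}
    (hM : 1 ≤ M) : ∃ m, IsLeast (unimodalLosses Q0 Q1 z M) m := by
  rw [unimodalLosses_eq_image hQ z hM]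
  have hcompact : IsCompact (Set.univ.pi (fun _ => Set.Icc Q0 Q1) ∩ {q | Quasiconcave M q}) :=
    (isCompact_univ_pi fun _ => isCompact_Icc).inter_right (isClosed_setOf_quasiconcave M)
  have hcont : Continuous fun q : ℕ → ℝ => linLoss z q M :=
    continuous_finsetSum _ fun n _ => continuous_const.mul (continuous_apply n)
  refine (hcompact.image hcont).exists_isLeast ⟨_, fun _ => Q0, ⟨?_, ?_⟩, rfl⟩
  · exact fun _ _ => ⟨le_rfl, hQ⟩
  · exact fun _ _ _ _ _ _ _ => min_le_left _ _

theorem isLeast_unimodalLosses_extLoss {Q0 Q1 Zu m : ℝ} {z : ℕ → ℝ} {N : ℕ} (hN : 1 ≤ N)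
    (hQ : Q0 ≤ Q1) (hZu : 0 ≤ Zu) (hm : IsLeast (unimodalLosses Q0 Q1 z N) m) :
    IsLeast (unimodalLosses Q0 Q1 (extLoss z N Zu) (N + 2)) (2 * Q0 * Zu + m) := by
  constructor
  · obtain ⟨q, hfeas, huni, rfl⟩ := hm.1
    have hpad : ∀ n, 1 ≤ n → n ≤ N → extLoss q N Q0 (n + 1) = q n := fun n h1 h2 => by
      simp only [extLoss, if_neg (show n + 1 ≠ 1 by omega), if_pos (show n + 1 ≤ N + 1 by omega),
        Nat.add_sub_cancel]
    have hquasi := huni.quasiconcave.extLoss fun n h1 h2 => (hfeas n h1 h2).1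
    refine ⟨extLoss q N Q0, hfeas.extLoss hQ, hquasi.unimodalOn (by omega), ?_⟩
    rw [linLoss_extLoss, linLoss_congr hpad]
    simp only [extLoss, ↓reduceIte, if_neg (show N + 2 ≠ 1 by omega),
      if_neg (show ¬ N + 2 ≤ N + 1 by omega)]
    ring
  · rintro L ⟨q, hfeas, huni, rfl⟩
    have hmid : m ≤ linLoss z (fun n => q (n + 1)) N :=
      hm.2 ⟨_, fun n h1 h2 => hfeas (n + 1) (by omega) (by omega),
        (huni.quasiconcave.comp_add (k := 1) (by omega)).unimodalOn hN, rfl⟩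
    have hleft := mul_le_mul_of_nonneg_left (hfeas 1 le_rfl (by omega)).1 hZu
    have hright := mul_le_mul_of_nonneg_left (hfeas (N + 2) (by omega) le_rfl).1 hZu
    rw [linLoss_extLoss]
    linarith

/-- the minimum of the linear loss for the extended sequence of length
`N + 2` over feasible unimodal sequences equals `2 Q0 Zu` plus the minimum of the
linear loss for the original sequence of length `N`. -/
theorem stmt12 (N : ℕ) (hN : 1 ≤ N) (z : ℕ → ℝ) (Q0 Q1 Zu : ℝ) (hQ : Q0 ≤ Q1)
    (hZu : 0 ≤ Zu) :
    ∃ m mext : ℝ,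
      IsLeast {L : ℝ | ∃ q : ℕ → ℝ, Feasible Q0 Q1 N q ∧ UnimodalOn N q ∧
        L = linLoss z q N} m ∧
      IsLeast {L : ℝ | ∃ q : ℕ → ℝ, Feasible Q0 Q1 (N + 2) q ∧ UnimodalOn (N + 2) q ∧
        L = linLoss (extLoss z N Zu) q (N + 2)} mext ∧
      mext = 2 * Q0 * Zu + m := by
  obtain ⟨m, hm⟩ := exists_isLeast_unimodalLosses hQ z hN
  exact ⟨m, 2 * Q0 * Zu + m, hm, isLeast_unimodalLosses_extLoss hN hQ hZu hm, rfl⟩
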